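/- arXiv:1409.3956 — 5 statements merged into one kernel-verified Lean document; each statement's English description precedes it below -/
import Mathlib

section
/- For every natural number n and real x, the Chebyshev polynomial of the second kind satisfies U_n(x) = ∑_{j=0}^{n} (-2)^j * C(n+j+1, 2j+1) * (1-x)^j, where C denotes the binomial coefficient. -/
open Polynomial Finset

lemma choose_id (m k : ℕ) : (m+2).choose (k+2) + m.choose (k+2) = 2 * (m+1).choose (k+2) + m.choose k := by
  have h1 : (m+2).choose (k+2) = (m+1).choose (k+1) + (m+1).choose (k+2) := Nat.choose_succ_succ _ _
  have h2 : (m+1).choose (k+1) = m.choose k + m.choose (k+1) := Nat.choose_succ_succ _ _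
  have h3 : (m+1).choose (k+2) = m.choose (k+1) + m.choose (k+2) := Nat.choose_succ_succ _ _
  omega

theorem chebyshevU_eq_sum (n : ℕ) (x : ℝ) :
    (Polynomial.Chebyshev.U ℝ n).eval x =
      ∑ j ∈ Finset.range (n + 1),
        (-2 : ℝ) ^ j * (Nat.choose (n + j + 1) (2 * j + 1)) * (1 - x) ^ j := by
  induction n using Nat.twoStepInduction with
  | zero => simp [Polynomial.Chebyshev.U_zero]
  | one =>
    simp [Polynomial.Chebyshev.U_one, Finset.sum_range_succ]
    ring
  | more n ih1 ih2 =>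
    have hU : (Polynomial.Chebyshev.U ℝ (↑(n+2))).eval x =
        2*x*(Polynomial.Chebyshev.U ℝ (↑(n+1))).eval x - (Polynomial.Chebyshev.U ℝ (↑n)).eval x := by
      have h := Polynomial.Chebyshev.U_add_two ℝ (n : ℤ)
      push_cast
      rw [h]
      simp
    rw [hU, ih1, ih2]
    -- extend the two shorter sums to range (n+2+1)
    have e1 : ∑ j ∈ Finset.range (n + 1 + 1), (-2:ℝ) ^ j * ↑((n + 1 + j + 1).choose (2 * j + 1)) * (1 - x) ^ j
        = ∑ j ∈ Finset.range (n + 2 + 1), (-2:ℝ) ^ j * ↑((n + 1 + j + 1).choose (2 * j + 1)) * (1 - x) ^ j := by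
      rw [Finset.sum_range_succ (fun j => (-2:ℝ) ^ j * ↑((n + 1 + j + 1).choose (2 * j + 1)) * (1 - x) ^ j) (n+2),
        Nat.choose_eq_zero_of_lt (by omega)]
      simp
    have e2 : ∑ j ∈ Finset.range (n + 1), (-2:ℝ) ^ j * ↑((n + j + 1).choose (2 * j + 1)) * (1 - x) ^ j
        = ∑ j ∈ Finset.range (n + 2 + 1), (-2:ℝ) ^ j * ↑((n + j + 1).choose (2 * j + 1)) * (1 - x) ^ j := by
      rw [Finset.sum_range_succ (fun j => (-2:ℝ) ^ j * ↑((n + j + 1).choose (2 * j + 1)) * (1 - x) ^ j) (n+2),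
        Finset.sum_range_succ (fun j => (-2:ℝ) ^ j * ↑((n + j + 1).choose (2 * j + 1)) * (1 - x) ^ j) (n+1),
        Nat.choose_eq_zero_of_lt (by omega), Nat.choose_eq_zero_of_lt (by omega)]
      simp
    rw [e1, e2]
    -- termwise key identity
    have key : ∑ j ∈ Finset.range (n + 2),
        ((-2:ℝ) ^ (j+1) * ↑((n + 2 + (j+1) + 1).choose (2 * (j+1) + 1)) * (1 - x) ^ (j+1)
          + (-2:ℝ) ^ (j+1) * ↑((n + (j+1) + 1).choose (2 * (j+1) + 1)) * (1 - x) ^ (j+1)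
          + 2*(1-x) * ((-2:ℝ) ^ j * ↑((n + 1 + j + 1).choose (2 * j + 1)) * (1 - x) ^ j))
        = ∑ j ∈ Finset.range (n + 2),
          2 * ((-2:ℝ) ^ (j+1) * ↑((n + 1 + (j+1) + 1).choose (2 * (j+1) + 1)) * (1 - x) ^ (j+1)) := by
      refine Finset.sum_congr rfl fun j hj => ?_
      have h := choose_id (n+j+2) (2*j+1)
      have h' : (((n+j+2+2).choose (2*j+1+2)):ℝ) + ((n+j+2).choose (2*j+1+2))
          = 2*((n+j+2+1).choose (2*j+1+2)) + ((n+j+2).choose (2*j+1)) := by exact_mod_cast h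
      simp only [show n+2+(j+1)+1 = n+j+2+2 from by omega, show 2*(j+1)+1 = 2*j+1+2 from by omega,
        show n+(j+1)+1 = n+j+2 from by omega, show n+1+(j+1)+1 = n+j+2+1 from by omega,
        show n+1+j+1 = n+j+2 from by omega]
      linear_combination ((-2:ℝ)^(j+1) * (1-x)^(j+1)) * h'
    -- split key into separate sums
    rw [Finset.sum_add_distrib, Finset.sum_add_distrib, ← Finset.mul_sum, ← Finset.mul_sum] at key
    -- peel off j = 0 from the three full sums
    rw [Finset.sum_range_succ' (fun j => (-2:ℝ) ^ j * ↑((n + 2 + j + 1).choose (2 * j + 1)) * (1 - x) ^ j) (n+2),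
      Finset.sum_range_succ' (fun j => (-2:ℝ) ^ j * ↑((n + j + 1).choose (2 * j + 1)) * (1 - x) ^ j) (n+2),
      Finset.sum_range_succ' (fun j => (-2:ℝ) ^ j * ↑((n + 1 + j + 1).choose (2 * j + 1)) * (1 - x) ^ j) (n+2)]
    -- relation between the shifted and unshifted middle sum
    have h1b : (∑ j ∈ Finset.range (n + 2), (-2:ℝ) ^ (j+1) * ↑((n + 1 + (j+1) + 1).choose (2 * (j+1) + 1)) * (1 - x) ^ (j+1))
          + (-2:ℝ) ^ 0 * ↑((n + 1 + 0 + 1).choose (2 * 0 + 1)) * (1 - x) ^ 0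
        = ∑ j ∈ Finset.range (n + 2), (-2:ℝ) ^ j * ↑((n + 1 + j + 1).choose (2 * j + 1)) * (1 - x) ^ j := by
      rw [← Finset.sum_range_succ' (fun j => (-2:ℝ) ^ j * ↑((n + 1 + j + 1).choose (2 * j + 1)) * (1 - x) ^ j) (n+2),
        Finset.sum_range_succ (fun j => (-2:ℝ) ^ j * ↑((n + 1 + j + 1).choose (2 * j + 1)) * (1 - x) ^ j) (n+2),
        Nat.choose_eq_zero_of_lt (by omega)]
      simp
    have c0h : (((n+0+1).choose (2*0+1)) : ℝ) = n+1 := by push_cast [Nat.choose_one_right]; ring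
    have c1h : (((n+1+0+1).choose (2*0+1)) : ℝ) = n+2 := by push_cast [Nat.choose_one_right]; ring
    have c2h : (((n+2+0+1).choose (2*0+1)) : ℝ) = n+3 := by push_cast [Nat.choose_one_right]; ring
    linear_combination -key - 2*(1-x)*h1b + 2*c1h - c0h - c2h
end

section
/- Let q_n(x) be the determinant of the n×n matrix with 2x on the diagonal, 1 on the super- and sub-diagonal, 1 in the (1,n) and (n,1) entries, and 0 elsewhere (the circulant-type matrix 2xI + A for the affine Dynkin diagram A_{n-1}^{(1)}). Then q_n(x) = 2 T_n(x) + 2(-1)^{n-1}, where T_n is the n-th Chebyshev polynomial of the first kind. -/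
/-!
With `P` the permutation matrix of the `n`-cycle, the matrix is `2x + P + P⁻¹`. Choose `a, b ∈ ℂ`
with `a + b = 2x` and `ab = 1`; then `P (2x + P + P⁻¹) = (a + P)(b + P)`. The characteristic
polynomial of `P` is `tⁿ - 1`, so `det (a + P) = aⁿ - (-1)ⁿ`, and `det P = (-1)ⁿ⁻¹`. Hence the
determinant is `aⁿ + bⁿ + 2(-1)ⁿ⁻¹`, and `aⁿ + bⁿ = 2 Tₙ(x)` because `Tₙ((a + a⁻¹)/2) = (aⁿ + a⁻ⁿ)/2`.
-/

open Polynomial Matrix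

section CyclicPermutationMatrix

variable {R : Type*} [CommRing R]

theorem det_scalar_sub_permMatrix_finRotate (n : ℕ) [NeZero n] (t : R) :
    (scalar (Fin n) t - (finRotate n).permMatrix R).det = t ^ n - 1 := by
  obtain ⟨m, rfl⟩ := Nat.exists_eq_add_one_of_ne_zero (NeZero.ne n)
  rcases m with _ | m
  · simp
  set A := scalar (Fin (m + 2)) t - (finRotate (m + 2)).permMatrix R
  have hA : ∀ i j, A i j = (if i = j then t else 0) - if finRotate _ i = j then 1 else 0 := by
    intro i j
    simp [A, diagonal_apply]
  -- Column `0` of `A` meets only rows `0` and `last`, and both complementary minors are triangular.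
  have upper : (A.submatrix Fin.succ Fin.succ).det = t ^ (m + 1) := by
    rw [det_of_isUpperTriangular]
    · simp [hA]
    · intro i j (hji : j < i)
      have hji' : (j : ℕ) < i := hji
      have hrot : finRotate _ i.succ ≠ j.succ := by
        rw [Ne, Fin.ext_iff, coe_finRotate]
        simp only [Fin.ext_iff, Fin.val_succ, Fin.val_last]
        split_ifs <;> (simp; try omega)
      simp only [submatrix_apply, hA, if_neg (Fin.succ_inj.not.mpr hji.ne'), if_neg hrot,
        sub_zero]
  have lower : (A.submatrix Fin.castSucc Fin.succ).det = (-1) ^ (m + 1) := by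
    rw [det_of_isLowerTriangular]
    · simp [hA, Fin.ext_iff]
    · intro i j (hij : i < j)
      have hij' : (i : ℕ) < j := hij
      have hne : i.castSucc ≠ j.succ := by rw [Ne, Fin.ext_iff]; simp; omega
      have hrot : finRotate _ i.castSucc ≠ j.succ := by rw [Ne, Fin.ext_iff]; simp; omega
      simp only [submatrix_apply, hA, if_neg hne, if_neg hrot, sub_zero]
  rw [det_succ_column_zero, Fintype.sum_eq_add 0 (Fin.last _) (by simp [Fin.ext_iff])]
  · simp [hA, upper, lower]
    rw [← mul_pow, neg_one_mul, neg_neg, one_pow]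
    ring
  · rintro i ⟨h0, hlast⟩
    have hrot : finRotate _ i ≠ 0 := by
      rwa [Ne, ← finRotate_last, (finRotate _).apply_eq_iff_eq]
    simp only [hA, if_neg h0, if_neg hrot, sub_zero, mul_zero, zero_mul]

theorem det_scalar_add_permMatrix_finRotate (n : ℕ) [NeZero n] (a : R) :
    (scalar (Fin n) a + (finRotate n).permMatrix R).det = a ^ n - (-1) ^ n := by
  rw [← neg_neg (scalar (Fin n) a + _), det_neg, neg_add', ← map_neg,
    det_scalar_sub_permMatrix_finRotate, Fintype.card_fin, mul_sub, ← mul_pow]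
  simp

theorem det_scalar_add_permMatrix_finRotate_add_transpose (n : ℕ) [NeZero n] {a b : R}
    (hab : a * b = 1) :
    (scalar (Fin n) (a + b) + (finRotate n).permMatrix R + ((finRotate n).permMatrix R)ᵀ).det =
      a ^ n + b ^ n + 2 * (-1) ^ (n - 1) := by
  set P := (finRotate n).permMatrix R
  have hPPt : P * Pᵀ = 1 := by simp [P, ← permMatrix_mul]
  have hfactor : (scalar (Fin n) a + P) * (scalar (Fin n) b + P) =
      P * (scalar (Fin n) (a + b) + P + Pᵀ) := by
    simp only [mul_add, add_mul, hPPt, ← map_mul, hab, map_one, map_add,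
      (scalar_commute a (Commute.all a) P).eq]
    abel
  have hdetP : P.det = (-1) ^ (n - 1) := by simp [P, sign_finRotate]
  have hdet := congrArg det hfactor
  rw [det_mul, det_mul, det_scalar_add_permMatrix_finRotate, det_scalar_add_permMatrix_finRotate,
    hdetP] at hdet
  obtain ⟨m, rfl⟩ := Nat.exists_eq_add_one_of_ne_zero (NeZero.ne n)
  have hs : (-1 : R) ^ m * (-1) ^ m = 1 := by rw [← mul_pow]; simp
  have hpow : a ^ (m + 1) * b ^ (m + 1) = 1 := by rw [← mul_pow, hab, one_pow]
  rw [pow_succ (-1 : R) m, Nat.add_sub_cancel] at hdet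
  rw [Nat.add_sub_cancel]
  linear_combination (-(-1) ^ m) * hdet + (-1) ^ m * hpow +
    (a ^ (m + 1) + b ^ (m + 1) - (scalar (Fin (m + 1)) (a + b) + P + Pᵀ).det + (-1) ^ m) * hs

theorem affine_A_matrix_eq_scalar_add_permMatrix_add_transpose (n : ℕ) (hn : 3 ≤ n) (y : R) :
    (of fun i j : Fin n =>
      if i = j then y
      else if i.val + 1 = j.val ∨ j.val + 1 = i.val ∨
        (i.val = 0 ∧ j.val = n - 1) ∨ (i.val = n - 1 ∧ j.val = 0) then (1 : R)
      else 0) =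
    scalar (Fin n) y + (finRotate n).permMatrix R + ((finRotate n).permMatrix R)ᵀ := by
  obtain ⟨m, rfl⟩ : ∃ m, n = m + 1 := ⟨n - 1, by omega⟩
  ext i j
  simp only [of_apply, Matrix.add_apply, scalar_apply, diagonal_apply, transpose_apply,
    Equiv.Perm.permMatrix, PEquiv.toMatrix_apply, Equiv.toPEquiv_apply, Option.mem_def,
    Option.some.injEq, Fin.ext_iff, coe_finRotate, Fin.val_last, Nat.add_sub_cancel]
  split_ifs <;> first | omega | simp

end CyclicPermutationMatrix

theorem Polynomial.Chebyshev.two_mul_T_eval_eq_pow_add_pow {R : Type*} [CommRing R] {a b x : R}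
    (hab : a * b = 1) (hx : a + b = 2 * x) (n : ℕ) :
    2 * (T R n).eval x = a ^ n + b ^ n := by
  have h := congrArg (eval x) (C_comp_two_mul_X R n)
  rw [eval_comp, ← dickson_one_one_eq_chebyshev_C] at h
  simpa [← hx, dickson_one_one_eval_add_inv a b hab] using h.symm

theorem det_affine_A_matrix (n : ℕ) (hn : 3 ≤ n) (x : ℝ) :
    Matrix.det (Matrix.of fun i j : Fin n =>
      if i = j then 2 * x
      else if i.val + 1 = j.val ∨ j.val + 1 = i.val ∨
        (i.val = 0 ∧ j.val = n - 1) ∨ (i.val = n - 1 ∧ j.val = 0) then (1 : ℝ)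
      else 0) =
    2 * (Polynomial.Chebyshev.T ℝ n).eval x + 2 * (-1 : ℝ) ^ (n - 1) := by
  have : NeZero n := ⟨by omega⟩
  -- `x ± s` are the roots of `t² - 2xt + 1`.
  obtain ⟨s, hs⟩ := IsAlgClosed.exists_pow_nat_eq ((x : ℂ) ^ 2 - 1) two_pos
  have hab : ((x : ℂ) + s) * (x - s) = 1 := by linear_combination -hs
  have hsum : (x : ℂ) + s + (x - s) = 2 * x := by ring
  apply Complex.ofReal_injective
  calc _ = (scalar (Fin n) (2 * (x : ℂ)) + (finRotate n).permMatrix ℂ +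
          ((finRotate n).permMatrix ℂ)ᵀ).det := by
        rw [← affine_A_matrix_eq_scalar_add_permMatrix_add_transpose n hn,
          ← Complex.ofRealHom_eq_coe, RingHom.map_det]
        congr 1
        ext i j
        simp only [RingHom.mapMatrix_apply, map_apply, of_apply]
        split_ifs <;> simp
    _ = _ := by
        rw [← hsum, det_scalar_add_permMatrix_finRotate_add_transpose n hab,
          ← Chebyshev.two_mul_T_eval_eq_pow_add_pow hab hsum,
          ← Chebyshev.map_T Complex.ofRealHom]
        simp only [← Complex.ofRealHom_eq_coe, eval_map_apply, map_add, map_mul, map_pow, map_neg,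
          map_one, map_ofNat]
end

section
/- Let p_n(x) be the characteristic polynomial of the n×n affine Cartan matrix of type A_{n-1}^{(1)}. Then p_n(x) = ∑_{j=1}^{n} (-1)^{n+j} * 2n * (n+j-1)! / ((n-j)! * (2j)!) * x^j. -/
/-!
The affine Cartan matrix is the circulant matrix with first column `(2, -1, 0, …, 0, -1)`, so the
discrete Fourier transform diagonalises it: its eigenvalues are `2 - ω - ω⁻¹`, `ω` running over the
`n`-th roots of unity. Writing `2 - x = α + α⁻¹`, the factor `x - 2 + ω + ω⁻¹` is
`ω⁻¹ (α - ω) (α⁻¹ - ω)`, and `∏ (c - ω) = cⁿ - 1` collapses the characteristic polynomial to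
`(-1)ⁿ (αⁿ + α⁻ⁿ - 2) = (-1)ⁿ (Dₙ(2 - x) - 2)`, where `Dₙ` is the Dickson polynomial with
`Dₙ(α + α⁻¹) = αⁿ + α⁻ⁿ`. By Pascal's rule the numbers `C(n+j, 2j) + C(n+j-1, 2j)` satisfy the
three-term recurrence of `Dₙ(2 - X)`, so they are, up to the sign `(-1)ʲ`, its coefficients; for
`1 ≤ j ≤ n` they equal `2n (n+j-1)! / ((n-j)! (2j)!)`.
-/

open Polynomial Matrix Finset
open scoped Nat

theorem Nat.choose_add_two_add_choose (a b : ℕ) :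
    (a + 2).choose (b + 2) + a.choose (b + 2) = 2 * (a + 1).choose (b + 2) + a.choose b := by
  simp only [Nat.choose_succ_succ]
  ring

theorem Fin.sub_eq_one_iff {n : ℕ} [NeZero n] (i j : Fin n) :
    i - j = 1 ↔ (j : ℕ) + 1 = i ∨ ((i : ℕ) = 0 ∧ (j : ℕ) = n - 1) := by
  have hone : (1 < n ∧ ((1 : Fin n) : ℕ) = 1) ∨ (n = 1 ∧ ((1 : Fin n) : ℕ) = 0) := by
    rw [Fin.val_one']
    rcases Nat.lt_or_ge 1 n with h | h
    · exact .inl ⟨h, Nat.mod_eq_of_lt h⟩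
    · obtain rfl : n = 1 := by have := NeZero.pos n; omega
      exact .inr ⟨rfl, Nat.mod_one 1⟩
  have := i.isLt
  have := j.isLt
  rw [Fin.ext_iff]
  rcases le_or_gt j i with h | h
  · rw [Fin.coe_sub_iff_le.mpr h]
    have : (j : ℕ) ≤ i := h
    constructor <;> intro <;> omega
  · rw [Fin.coe_sub_iff_lt.mpr h]
    have : (i : ℕ) < j := h
    constructor <;> intro <;> omega

namespace Matrix

variable {R : Type*} [CommRing R] {n : ℕ} [NeZero n] {ζ : R}

theorem vandermonde_mul_circulant (hζ : ζ ^ n = 1) (v : Fin n → R) :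
    vandermonde (fun k : Fin n => ζ ^ (k : ℕ)) * circulant v =
      diagonal (fun k : Fin n => ∑ m, v m * (ζ ^ (k : ℕ)) ^ (m : ℕ)) *
        vandermonde (fun k : Fin n => ζ ^ (k : ℕ)) := by
  ext k j
  have hpow (a b : Fin n) : (ζ ^ (k : ℕ)) ^ ((a + b : Fin n) : ℕ) =
      (ζ ^ (k : ℕ)) ^ (a : ℕ) * (ζ ^ (k : ℕ)) ^ (b : ℕ) := by
    rw [Fin.val_add, ← pow_add, ← pow_eq_pow_mod _ (by rw [← pow_mul, mul_comm, pow_mul, hζ, one_pow])]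
  rw [mul_apply, diagonal_mul, vandermonde_apply, sum_mul, ← Equiv.sum_comp (Equiv.addRight j)]
  refine sum_congr rfl fun m _ => ?_
  simp only [Equiv.coe_addRight, vandermonde_apply, circulant_apply, add_sub_cancel_right, hpow]
  ring

theorem det_circulant [IsDomain R] (hζ : IsPrimitiveRoot ζ n) (v : Fin n → R) :
    (circulant v).det = ∏ k : Fin n, ∑ m, v m * (ζ ^ (k : ℕ)) ^ (m : ℕ) := by
  have hF : (vandermonde fun k : Fin n => ζ ^ (k : ℕ)).det ≠ 0 :=
    det_vandermonde_ne_zero_iff.mpr fun i j hij => Fin.ext (hζ.pow_inj i.isLt j.isLt hij)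
  have h := congrArg det (vandermonde_mul_circulant hζ.pow_eq_one v)
  rw [det_mul, det_mul, det_diagonal, mul_comm] at h
  exact mul_right_cancel₀ hF h

theorem charpoly_circulant [IsDomain R] (hζ : IsPrimitiveRoot ζ n) (v : Fin n → R) :
    (circulant v).charpoly = ∏ k : Fin n, (X - C (∑ m, v m * (ζ ^ (k : ℕ)) ^ (m : ℕ))) := by
  have hcharmatrix :
      charmatrix (circulant v) = circulant ((Pi.single 0 X : Fin n → R[X]) - fun m => C (v m)) := by
    rw [charmatrix, circulant_sub, circulant_single, RingHom.mapMatrix_apply, map_circulant]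
  rw [charpoly, hcharmatrix, det_circulant (hζ.map_of_injective C_injective)]
  refine prod_congr rfl fun k _ => ?_
  simp [sub_mul, sum_sub_distrib, Pi.single_apply]

end Matrix

theorem IsPrimitiveRoot.prod_add_inv_sub_pow_add_inv {K : Type*} [Field K] {n : ℕ} {ζ : K}
    (hζ : IsPrimitiveRoot ζ n) (hn : 0 < n) {α : K} (hα : α ≠ 0) :
    ∏ k ∈ range n, (α + α⁻¹ - (ζ ^ k + (ζ ^ k)⁻¹)) = α ^ n + α⁻¹ ^ n - 2 := by
  have hroots (c : K) : ∏ k ∈ range n, (c - ζ ^ k) = c ^ n - 1 := by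
    simpa [eval_prod] using congrArg (eval c) (X_pow_sub_C_eq_prod hζ hn (one_pow n)).symm
  have hprod : ∏ k ∈ range n, -ζ ^ k = -1 := by
    simpa [zero_pow hn.ne'] using hroots 0
  have hfactor (k : ℕ) :
      α + α⁻¹ - (ζ ^ k + (ζ ^ k)⁻¹) = (-ζ ^ k)⁻¹ * ((α - ζ ^ k) * (α⁻¹ - ζ ^ k)) := by
    have : ζ ^ k ≠ 0 := pow_ne_zero _ (hζ.ne_zero hn.ne')
    field_simp
    ring
  have hαn : α ^ n * α⁻¹ ^ n = 1 := by rw [← mul_pow, mul_inv_cancel₀ hα, one_pow]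
  rw [prod_congr rfl fun k _ => hfactor k, prod_mul_distrib, prod_mul_distrib, prod_inv_distrib,
    hroots, hroots, hprod]
  linear_combination -hαn

/-- With truncated subtraction, `affineCartanCoeff 0 0 = 2`, matching `dickson 1 1 0 = 2`. -/
def affineCartanCoeff (n j : ℕ) : ℕ := (n + j).choose (2 * j) + (n + j - 1).choose (2 * j)

theorem affineCartanCoeff_zero_right (n : ℕ) : affineCartanCoeff n 0 = 2 := by
  simp [affineCartanCoeff]

theorem affineCartanCoeff_eq_zero {n j : ℕ} (h : n < j) : affineCartanCoeff n j = 0 := by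
  simp only [affineCartanCoeff, Nat.add_eq_zero_iff]
  constructor <;> exact Nat.choose_eq_zero_of_lt (by omega)

theorem affineCartanCoeff_add_two (n j : ℕ) :
    affineCartanCoeff (n + 2) (j + 1) + affineCartanCoeff n (j + 1) =
      2 * affineCartanCoeff (n + 1) (j + 1) + affineCartanCoeff (n + 1) j := by
  have h₁ := Nat.choose_add_two_add_choose (n + j + 1) (2 * j)
  have h₂ := Nat.choose_add_two_add_choose (n + j) (2 * j)
  simp only [affineCartanCoeff]
  rw [show n + 2 + (j + 1) - 1 = n + j + 2 by omega, show n + (j + 1) - 1 = n + j by omega,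
    show n + 1 + (j + 1) - 1 = n + j + 1 by omega, show n + 1 + j - 1 = n + j by omega,
    show n + 2 + (j + 1) = n + j + 1 + 2 by omega, show n + (j + 1) = n + j + 1 by omega,
    show n + 1 + (j + 1) = n + j + 2 by omega, show n + 1 + j = n + j + 1 by omega,
    show 2 * (j + 1) = 2 * j + 2 by ring]
  ring_nf at h₁ h₂ ⊢
  omega

theorem affineCartanCoeff_mul_factorial_mul_factorial {n j : ℕ} (hj : 1 ≤ j) (hjn : j ≤ n) :
    affineCartanCoeff n j * (n - j)! * (2 * j)! = 2 * n * (n + j - 1)! := by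
  obtain ⟨r, rfl⟩ : ∃ r, n = r + j := ⟨n - j, by omega⟩
  have h₁ : (r + 2 * j).choose (2 * j) * r ! * (2 * j)! = (r + 2 * j - 1 + 1)! := by
    rw [Nat.sub_add_cancel (by omega), Nat.add_choose_mul_factorial_mul_factorial]
  have h₂ : (r + 2 * j - 1).choose (2 * j) * r ! * (2 * j)! = r * (r + 2 * j - 1)! := by
    rcases r with _ | s
    · simp [Nat.choose_eq_zero_of_lt (show 2 * j - 1 < 2 * j by omega)]
    · rw [show s + 1 + 2 * j - 1 = s + 2 * j by omega, Nat.factorial_succ,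
        ← Nat.add_choose_mul_factorial_mul_factorial s (2 * j)]
      ring
  rw [affineCartanCoeff, show r + j + j = r + 2 * j by ring, Nat.add_sub_cancel, add_mul, add_mul,
    h₁, h₂, Nat.factorial_succ, Nat.sub_add_cancel (by omega)]
  ring

theorem affineCartanCoeff_eq_div {K : Type*} [Field K] [CharZero K] {n j : ℕ} (hj : 1 ≤ j)
    (hjn : j ≤ n) : (affineCartanCoeff n j : K) = 2 * n * (n + j - 1)! / ((n - j)! * (2 * j)!) := by
  rw [eq_div_iff (by simp [Nat.factorial_ne_zero]), ← mul_assoc]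
  exact_mod_cast affineCartanCoeff_mul_factorial_mul_factorial hj hjn

namespace Polynomial

variable {R : Type*} [CommRing R]

theorem coeff_dickson_comp_two_sub_X (n j : ℕ) :
    ((dickson 1 (1 : R) n).comp (2 - X)).coeff j = (-1) ^ j * affineCartanCoeff n j := by
  induction n using Nat.twoStepInduction generalizing j with
  | zero =>
    have h₀ : dickson 1 (1 : R) 0 = 2 := by rw [dickson_zero]; norm_num
    rcases j with _ | j
    · simp [h₀, affineCartanCoeff]
    · simp [h₀, affineCartanCoeff_eq_zero]
  | one =>
    rw [dickson_one, X_comp, coeff_sub]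
    rcases j with _ | _ | j
    · simp [affineCartanCoeff]
    · simp [affineCartanCoeff]
    · simp [affineCartanCoeff_eq_zero, coeff_X]
  | more n ih₀ ih₁ =>
    rw [dickson_add_two, map_one, one_mul, sub_comp, mul_comp, X_comp, coeff_sub, sub_mul,
      coeff_sub]
    rcases j with _ | j
    · norm_num [ih₀, ih₁, affineCartanCoeff_zero_right]
    · have h := congrArg (Nat.cast : ℕ → R) (affineCartanCoeff_add_two n j)
      push_cast at h
      rw [coeff_X_mul, coeff_ofNat_mul, ih₀, ih₁, ih₁]
      linear_combination (-1) ^ j * h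

theorem eval_two_sub_dickson (n : ℕ) (x : R) :
    (dickson 1 (1 : R) n).eval (2 - x) =
      ∑ j ∈ range (n + 1), (-1) ^ j * (affineCartanCoeff n j : R) * x ^ j := by
  have hdeg : ((dickson 1 (1 : R) n).comp (2 - X)).natDegree < n + 1 :=
    Nat.lt_succ_of_le <| natDegree_le_iff_coeff_eq_zero.mpr fun j hj => by
      rw [coeff_dickson_comp_two_sub_X, affineCartanCoeff_eq_zero hj, Nat.cast_zero, mul_zero]
  rw [show 2 - x = (2 - X : R[X]).eval x by simp, ← eval_comp, eval_eq_sum_range' hdeg]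
  simp only [coeff_dickson_comp_two_sub_X]

end Polynomial

theorem sum_Icc_eq_eval_two_sub_dickson {K : Type*} [Field K] [CharZero K] (n : ℕ) (x : K) :
    ∑ j ∈ Icc 1 n, (-1 : K) ^ (n + j) * (2 * n * (n + j - 1)!) / ((n - j)! * (2 * j)!) * x ^ j =
      (-1) ^ n * ((dickson 1 (1 : K) n).eval (2 - x) - 2) := by
  rw [eval_two_sub_dickson, sum_range_succ', affineCartanCoeff_zero_right,
    ← Ico_add_one_right_eq_Icc, sum_Ico_eq_sum_range, Nat.add_sub_cancel]
  simp only [pow_zero, one_mul, mul_one, Nat.cast_ofNat, add_sub_cancel_right]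
  rw [mul_sum]
  refine sum_congr rfl fun k hk => ?_
  rw [affineCartanCoeff_eq_div (by omega) (by simpa using hk), add_comm 1 k, pow_add]
  ring

def affineCartanA (R : Type*) [Ring R] (n : ℕ) : Matrix (Fin n) (Fin n) R :=
  of fun i j : Fin n =>
    if i = j then 2
    else if i.val + 1 = j.val ∨ j.val + 1 = i.val ∨
      (i.val = 0 ∧ j.val = n - 1) ∨ (i.val = n - 1 ∧ j.val = 0) then -1
    else 0

theorem affineCartanA_map {R S : Type*} [Ring R] [Ring S] (f : R →+* S) (n : ℕ) :
    (affineCartanA R n).map f = affineCartanA S n := by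
  ext i j
  simp only [affineCartanA, map_apply, of_apply]
  split_ifs <;> simp [map_ofNat]

def affineCartanColumn (R : Type*) [Ring R] (n : ℕ) [NeZero n] : Fin n → R :=
  Pi.single 0 2 - Pi.single 1 1 - Pi.single (-1) 1

theorem affineCartanA_eq_circulant (R : Type*) [Ring R] {n : ℕ} [NeZero n] (hn : 3 ≤ n) :
    affineCartanA R n = circulant (affineCartanColumn R n) := by
  ext i j
  have hneg : i - j = -1 ↔ j - i = 1 := by rw [← neg_sub, neg_inj]
  simp only [affineCartanA, affineCartanColumn, of_apply, circulant_apply, Pi.sub_apply,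
    Pi.single_apply, sub_eq_zero, hneg, Fin.sub_eq_one_iff]
  simp only [Fin.ext_iff]
  split_ifs <;> first | omega | simp

theorem eval_charpoly_affineCartanA_complex {n : ℕ} (hn : 3 ≤ n) (z : ℂ) :
    (affineCartanA ℂ n).charpoly.eval z = (-1) ^ n * ((dickson 1 (1 : ℂ) n).eval (2 - z) - 2) := by
  obtain ⟨m, rfl⟩ : ∃ m, n = m + 3 := ⟨n - 3, by omega⟩
  have hζ := Complex.isPrimitiveRoot_exp (m + 3) (by omega)
  set ζ := Complex.exp (2 * Real.pi * Complex.I / (m + 3 : ℕ))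
  obtain ⟨θ, hθ⟩ := Complex.cos_surjective ((2 - z) / 2)
  set α := Complex.exp (θ * Complex.I)
  have hα : α + α⁻¹ = 2 - z := by
    rw [← Complex.exp_neg, ← neg_mul, ← Complex.two_cos, hθ]
    ring
  have heig (k : ℕ) : z - ∑ i, affineCartanColumn ℂ (m + 3) i * (ζ ^ k) ^ (i : ℕ) =
      -(α + α⁻¹ - (ζ ^ k + (ζ ^ k)⁻¹)) := by
    have hinv : (ζ ^ k) ^ (m + 2) = (ζ ^ k)⁻¹ := by
      refine eq_inv_of_mul_eq_one_left ?_
      rw [← pow_succ, ← pow_mul, mul_comm, pow_mul, hζ.pow_eq_one, one_pow]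
    simp [affineCartanColumn, sub_mul, sum_sub_distrib, Pi.single_apply, Fin.coe_neg_one, hinv, hα]
    ring
  rw [affineCartanA_eq_circulant ℂ hn, charpoly_circulant hζ, eval_prod]
  simp only [eval_sub, eval_X, eval_C]
  rw [prod_congr rfl fun (k : Fin (m + 3)) _ => heig k,
    Fin.prod_univ_eq_prod_range (fun k => -(α + α⁻¹ - (ζ ^ k + (ζ ^ k)⁻¹))), prod_neg, card_range,
    hζ.prod_add_inv_sub_pow_add_inv (by omega) (Complex.exp_ne_zero _),
    ← dickson_one_one_eval_add_inv α α⁻¹ (mul_inv_cancel₀ (Complex.exp_ne_zero _)), hα]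

theorem charpoly_affine_cartan_A (n : ℕ) (hn : 3 ≤ n) (x : ℝ) :
    ((Matrix.of fun i j : Fin n =>
      if i = j then (2 : ℝ)
      else if i.val + 1 = j.val ∨ j.val + 1 = i.val ∨
        (i.val = 0 ∧ j.val = n - 1) ∨ (i.val = n - 1 ∧ j.val = 0) then -1
      else 0).charpoly).eval x =
    ∑ j ∈ Finset.Icc 1 n,
      (-1 : ℝ) ^ (n + j) * (2 * n * Nat.factorial (n + j - 1)) /
        (Nat.factorial (n - j) * Nat.factorial (2 * j)) * x ^ j := by
  change (affineCartanA ℝ n).charpoly.eval x = _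
  rw [sum_Icc_eq_eval_two_sub_dickson]
  apply Complex.ofReal_injective
  have h := eval_charpoly_affineCartanA_complex hn (Complex.ofRealHom x)
  rw [← affineCartanA_map Complex.ofRealHom, charpoly_map, eval_map_apply,
    ← map_one Complex.ofRealHom, ← map_dickson, ← map_ofNat Complex.ofRealHom 2, ← map_sub,
    eval_map_apply] at h
  simpa using h
end

section
/- Let q_n(x) = 8x(x²-1)U_{n-3}(x) (the polynomial associated to B_{n-1}^{(1)}) and Q_n(x) = x^n q_n((x + 1/x)/2). Then Q_n(x) = x^{2n} - x^{2(n-2)} - x^4 + 1 = (x^4 - 1)(x^{2(n-2)} - 1) for all n ≥ 4. -/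
open Polynomial

theorem aux_U (x : ℝ) (hx : x ≠ 0) : ∀ k : ℕ,
    x ^ k * ((x ^ 2 - 1) * (Polynomial.Chebyshev.U ℝ (k : ℤ)).eval ((x + 1 / x) / 2)) =
      x ^ (2 * k + 2) - 1 := by
  intro k
  induction k using Nat.twoStepInduction with
  | zero => simp [Polynomial.Chebyshev.U_zero]
  | one =>
    simp only [Nat.cast_one, Polynomial.Chebyshev.U_one, eval_mul, eval_ofNat, eval_X]
    field_simp
    ring
  | more k ih1 ih2 =>
    have h2 : ((k : ℤ) + 2) = (k : ℤ) + 2 := rfl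
    push_cast
    rw [Polynomial.Chebyshev.U_add_two]
    simp only [eval_sub, eval_mul, eval_ofNat, eval_X]
    push_cast at ih2
    have hc1 : x * (2 * ((x + 1 / x) / 2)) = x ^ 2 + 1 := by
      field_simp
    refine mul_left_cancel₀ hx ?_
    linear_combination (x ^ (k + 2) * (x ^ 2 - 1) *
        (Polynomial.Chebyshev.U ℝ ((k : ℤ) + 1)).eval ((x + 1 / x) / 2)) * hc1 +
      (x * (x ^ 2 + 1)) * ih2 - x ^ 3 * ih1

theorem Q_eq_B (n : ℕ) (hn : 4 ≤ n) (x : ℝ) (hx : x ≠ 0) :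
    x ^ n * (8 * ((x + 1 / x) / 2) * (((x + 1 / x) / 2) ^ 2 - 1) *
        (Polynomial.Chebyshev.U ℝ ((n : ℤ) - 3)).eval ((x + 1 / x) / 2)) =
      x ^ (2 * n) - x ^ (2 * (n - 2)) - x ^ 4 + 1 ∧
    x ^ (2 * n) - x ^ (2 * (n - 2)) - x ^ 4 + 1 =
      (x ^ 4 - 1) * (x ^ (2 * (n - 2)) - 1) := by
  obtain ⟨k, rfl⟩ : ∃ k, n = k + 4 := ⟨n - 4, by omega⟩
  have hcast : ((k + 4 : ℕ) : ℤ) - 3 = ((k + 1 : ℕ) : ℤ) := by push_cast; ring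
  have hsub : k + 4 - 2 = k + 2 := by omega
  rw [hcast, hsub]
  have h := aux_U x hx (k + 1)
  push_cast at h
  push_cast
  constructor
  · set u := (Polynomial.Chebyshev.U ℝ ((k : ℤ) + 1)).eval ((x + 1 / x) / 2) with hu
    have hc3 : x ^ 3 * (8 * ((x + 1 / x) / 2) * (((x + 1 / x) / 2) ^ 2 - 1)) =
        (x ^ 2 + 1) * (x ^ 2 - 1) ^ 2 := by
      field_simp
      ring
    refine mul_left_cancel₀ (pow_ne_zero 3 hx) ?_
    linear_combination (x ^ (k + 4) * u) * hc3 + ((x ^ 2 + 1) * (x ^ 2 - 1) * x ^ 3) * h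
  · ring
end

section
/- Let q_n(x) = 16x²(x²-1)U_{n-4}(x) (the polynomial associated to D_{n-1}^{(1)}) and Q_n(x) = x^n q_n((x + 1/x)/2). Then Q_n(x) = (x⁴-1)(x²+1)(x^{2(n-3)}-1) for all n ≥ 5. -/
open Polynomial

lemma U_aux (x : ℝ) (hx : x ≠ 0) : ∀ m : ℕ,
    (x ^ 2 - 1) * x ^ m * (Polynomial.Chebyshev.U ℝ (m : ℤ)).eval ((x + 1 / x) / 2) =
      x ^ (2 * m + 2) - 1 := by
  have hxy : x * (1 / x) = 1 := by field_simp
  intro m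
  induction m using Nat.twoStepInduction with
  | zero => simp [Polynomial.Chebyshev.U_zero]
  | one =>
    simp only [Nat.cast_one, Polynomial.Chebyshev.U_one]
    simp only [Polynomial.eval_mul, Polynomial.eval_ofNat, Polynomial.eval_X]
    linear_combination (x ^ 2 - 1) * hxy
  | more m ih1 ih2 =>
    push_cast
    rw [show (m : ℤ) + 2 = (m : ℤ) + 2 from rfl, Polynomial.Chebyshev.U_add_two]
    simp only [Polynomial.eval_sub, Polynomial.eval_mul, Polynomial.eval_ofNat,
      Polynomial.eval_X]
    push_cast at ih1 ih2
    linear_combination (x ^ 2 + 1) * ih2 - x ^ 2 * ih1 +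
      (x ^ 2 - 1) * (Polynomial.Chebyshev.U ℝ ((m : ℤ) + 1)).eval ((x + 1 / x) / 2) *
        x ^ (m + 1) * hxy

theorem Q_eq_D (n : ℕ) (hn : 5 ≤ n) (x : ℝ) (hx : x ≠ 0) :
    x ^ n * (16 * ((x + 1 / x) / 2) ^ 2 * (((x + 1 / x) / 2) ^ 2 - 1) *
        (Polynomial.Chebyshev.U ℝ ((n : ℤ) - 4)).eval ((x + 1 / x) / 2)) =
      (x ^ 4 - 1) * (x ^ 2 + 1) * (x ^ (2 * (n - 3)) - 1) := by
  obtain ⟨m, rfl⟩ : ∃ m, n = m + 4 := ⟨n - 4, by omega⟩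
  have hcast : ((m + 4 : ℕ) : ℤ) - 4 = (m : ℤ) := by push_cast; ring
  rw [hcast]
  have key := U_aux x hx m
  have hm3 : m + 4 - 3 = m + 1 := by omega
  rw [hm3]
  have hx2 : x ^ 2 ≠ 0 := pow_ne_zero _ hx
  set u := (Polynomial.Chebyshev.U ℝ (m : ℤ)).eval ((x + 1 / x) / 2) with hu
  have h1 : x ^ (m + 4) * (16 * ((x + 1 / x) / 2) ^ 2 * (((x + 1 / x) / 2) ^ 2 - 1) * u)
      = (x ^ 2 + 1) ^ 2 * (x ^ 2 - 1) * ((x ^ 2 - 1) * x ^ m * u) := by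
    field_simp
    ring
  rw [h1, key]
  have : 2 * (m + 1) = 2 * m + 2 := by ring
  rw [this]
  ring
end
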